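/- Let $p$ be a prime, let $k = \mathbb{F}_p(t,u)$ be the field of rational functions in two variables $t, u$ over the prime field $\mathbb{F}_p$, and let $A = k[X,Y]/(Y^p - t - X - uX^p)$. If $k'$ is a field extension of $k$ containing elements $\tau$ and $\mu$ with $\tau^p = t$ and $\mu^p = u$, then $A \otimes_k k' \cong k'[T]$ as $k'$-algebras; in particular, $A$ is an $\mathbb{A}^1$-form over $k$. -/

import Mathlib

open TensorProduct MvPolynomial

/-- The field `k = 𝔽_p(t,u)` of rational functions in two variables `t = X 0`, `u = X 1`
over the prime field `𝔽_p = ZMod p`, realized as the fraction field of the polynomial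
ring `𝔽_p[t,u]`. -/
def RatFunc2 (p : ℕ) [Fact p.Prime] : Type :=
  FractionRing (MvPolynomial (Fin 2) (ZMod p))

noncomputable instance (p : ℕ) [Fact p.Prime] : Field (RatFunc2 p) :=
  inferInstanceAs (Field (FractionRing (MvPolynomial (Fin 2) (ZMod p))))

noncomputable instance (p : ℕ) [Fact p.Prime] :
    Algebra (MvPolynomial (Fin 2) (ZMod p)) (RatFunc2 p) :=
  inferInstanceAs
    (Algebra (MvPolynomial (Fin 2) (ZMod p)) (FractionRing (MvPolynomial (Fin 2) (ZMod p))))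

/-- `k = 𝔽_p(t,u)` is indeed the field of fractions of `𝔽_p[t,u]`. -/
instance (p : ℕ) [Fact p.Prime] :
    IsFractionRing (MvPolynomial (Fin 2) (ZMod p)) (RatFunc2 p) :=
  inferInstanceAs (IsFractionRing (MvPolynomial (Fin 2) (ZMod p))
    (FractionRing (MvPolynomial (Fin 2) (ZMod p))))

/-- The element `t` of `𝔽_p(t,u)`. -/
noncomputable abbrev tVar (p : ℕ) [Fact p.Prime] : RatFunc2 p :=
  algebraMap (MvPolynomial (Fin 2) (ZMod p)) (RatFunc2 p) (X 0)

/-- The element `u` of `𝔽_p(t,u)`. -/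
noncomputable abbrev uVar (p : ℕ) [Fact p.Prime] : RatFunc2 p :=
  algebraMap (MvPolynomial (Fin 2) (ZMod p)) (RatFunc2 p) (X 1)

/-- The `k`-algebra `A = k[X,Y]/(Y^p - t - X - u·X^p)` over `k = 𝔽_p(t,u)`
(with `X = X 0`, `Y = X 1`). -/
noncomputable abbrev AsanumaExample (p : ℕ) [Fact p.Prime] :=
  MvPolynomial (Fin 2) (RatFunc2 p) ⧸
    Ideal.span {(X 1 : MvPolynomial (Fin 2) (RatFunc2 p)) ^ p
      - C (tVar p) - X 0 - C (uVar p) * (X 0) ^ p}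

/-- A witness that the `k`-algebra `A` is an `𝔸¹`-form over the field `k`:
an algebraic field extension `k'` of `k` together with an isomorphism of `k'`-algebras
`A ⊗[k] k' ≅ k'[T]`. -/
structure A1FormWitnessOverField (k A : Type*) [Field k] [CommRing A] [Algebra k A] where
  k' : Type*
  [fieldk' : Field k']
  [algk' : Algebra k k']
  isAlgebraic : Algebra.IsAlgebraic k k'
  equiv : (k' ⊗[k] A) ≃ₐ[k'] Polynomial k'

/-!
Over a ring `K` of characteristic `p` containing `τ = t^(1/p)` and `μ = u^(1/p)`, Frobenius turns
the relation `y^p = t + x + u x^p` into `(y - τ - μ x)^p = x`. Hence `z = y - τ - μ x` is a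
coordinate of `K ⊗ A`: `x = z^p` and `y = z + τ + μ z^p`, so `K ⊗ A = K[z]`. Taking `K` to be an
algebraic closure of `k` shows that `A` is an `𝔸¹`-form.
-/

open scoped Polynomial

open Algebra.TensorProduct (includeRight)

theorem sub_sub_mul_pow_char_eq {R : Type*} [CommRing R] {p : ℕ} [Fact p.Prime] [CharP R p]
    {a b c d : R} (h : b ^ p = c ^ p + a + d ^ p * a ^ p) : (b - c - d * a) ^ p = a := by
  rw [sub_pow_char, sub_pow_char, mul_pow, h]
  ring

section

variable (k : Type*) [CommRing k] (p : ℕ) (t u : k)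

/-- `AsanumaExample p` unfolds to `AsanumaAlgebra (RatFunc2 p) p (tVar p) (uVar p)`. This is a
`def` with its own instances so that `Module k` comes from `Algebra k`: with the quotient-module
instance that an `abbrev` would expose, the tensor product algebra instances fail to unify. -/
def AsanumaAlgebra : Type _ :=
  MvPolynomial (Fin 2) k ⧸
    Ideal.span {(X 1 : MvPolynomial (Fin 2) k) ^ p - C t - X 0 - C u * X 0 ^ p}

noncomputable instance : CommRing (AsanumaAlgebra k p t u) :=
  Ideal.Quotient.commRing _

noncomputable instance : Algebra k (AsanumaAlgebra k p t u) :=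
  Ideal.Quotient.algebra k

namespace AsanumaAlgebra

variable {k p t u}

noncomputable def x : AsanumaAlgebra k p t u := Ideal.Quotient.mk _ (X 0)

noncomputable def y : AsanumaAlgebra k p t u := Ideal.Quotient.mk _ (X 1)

theorem y_pow : (y : AsanumaAlgebra k p t u) ^ p =
    algebraMap k _ t + x + algebraMap k _ u * x ^ p := by
  rw [← sub_eq_zero, ← sub_sub, ← sub_sub]
  exact Ideal.Quotient.eq_zero_iff_mem.mpr (Ideal.subset_span rfl)

theorem map_y_pow {B : Type*} [Semiring B] [Algebra k B] (f : AsanumaAlgebra k p t u →ₐ[k] B) :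
    f y ^ p = algebraMap k B t + f x + algebraMap k B u * f x ^ p := by
  rw [← map_pow, y_pow, map_add, map_add, map_mul, map_pow, AlgHom.commutes, AlgHom.commutes]

@[ext]
theorem algHom_ext {B : Type*} [Semiring B] [Algebra k B] {f g : AsanumaAlgebra k p t u →ₐ[k] B}
    (hx : f x = g x) (hy : f y = g y) : f = g := by
  refine Ideal.Quotient.algHom_ext k (MvPolynomial.algHom_ext fun i ↦ ?_)
  fin_cases i
  exacts [hx, hy]

noncomputable def lift {B : Type*} [CommRing B] [Algebra k B] (a b : B)
    (h : b ^ p = algebraMap k B t + a + algebraMap k B u * a ^ p) :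
    AsanumaAlgebra k p t u →ₐ[k] B :=
  Ideal.Quotient.liftₐ _ (aeval ![a, b]) fun f hf ↦ by
    obtain ⟨g, rfl⟩ := Ideal.mem_span_singleton'.mp hf
    simp only [map_mul, map_sub, map_pow, aeval_X, algHom_C, Matrix.cons_val_zero,
      Matrix.cons_val_one, Matrix.cons_val_fin_one, h]
    ring

@[simp]
theorem lift_x {B : Type*} [CommRing B] [Algebra k B] (a b : B)
    (h : b ^ p = algebraMap k B t + a + algebraMap k B u * a ^ p) :
    lift a b h (x : AsanumaAlgebra k p t u) = a := by
  change aeval ![a, b] (X 0) = a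
  simp

@[simp]
theorem lift_y {B : Type*} [CommRing B] [Algebra k B] (a b : B)
    (h : b ^ p = algebraMap k B t + a + algebraMap k B u * a ^ p) :
    lift a b h (y : AsanumaAlgebra k p t u) = b := by
  change aeval ![a, b] (X 1) = b
  simp

variable [Fact p.Prime] {K : Type*} [CommRing K] [CharP K p] [Algebra k K] {τ μ : K}
  (hτ : τ ^ p = algebraMap k K t) (hμ : μ ^ p = algebraMap k K u)
include hτ hμ

noncomputable def toPolynomial : K ⊗[k] AsanumaAlgebra k p t u →ₐ[K] K[X] :=
  Algebra.TensorProduct.lift (Algebra.ofId K K[X])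
    (lift (Polynomial.X ^ p) (Polynomial.X + Polynomial.C τ + Polynomial.C μ * Polynomial.X ^ p)
      (by
        rw [Polynomial.algebraMap_apply, Polynomial.algebraMap_apply, ← hτ, ← hμ, add_pow_char,
          add_pow_char, mul_pow, Polynomial.C_pow, Polynomial.C_pow]
        ring))
    fun _ _ ↦ .all _ _

theorem toPolynomial_includeRight_x :
    toPolynomial hτ hμ (includeRight x : K ⊗[k] AsanumaAlgebra k p t u) = Polynomial.X ^ p := by
  simp [toPolynomial]

theorem toPolynomial_includeRight_y :
    toPolynomial hτ hμ (includeRight y : K ⊗[k] AsanumaAlgebra k p t u) =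
      Polynomial.X + Polynomial.C τ + Polynomial.C μ * Polynomial.X ^ p := by
  simp [toPolynomial]

theorem charP_tensorProduct : CharP (K ⊗[k] AsanumaAlgebra k p t u) p :=
  charP_of_injective_algebraMap (R := K)
    (fun a b h ↦ Polynomial.C_injective <| by
      simpa only [AlgHom.commutes, Polynomial.algebraMap_eq] using congrArg (toPolynomial hτ hμ) h)
    p

omit hτ hμ in
noncomputable def coordinate (τ μ : K) : K ⊗[k] AsanumaAlgebra k p t u :=
  includeRight y - algebraMap K _ τ - algebraMap K _ μ * includeRight x

theorem toPolynomial_coordinate :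
    toPolynomial hτ hμ (coordinate τ μ : K ⊗[k] AsanumaAlgebra k p t u) = Polynomial.X := by
  rw [coordinate, map_sub, map_sub, map_mul, AlgHom.commutes, AlgHom.commutes,
    toPolynomial_includeRight_x, toPolynomial_includeRight_y, Polynomial.algebraMap_eq]
  ring

theorem coordinate_pow :
    (coordinate τ μ : K ⊗[k] AsanumaAlgebra k p t u) ^ p = includeRight x := by
  have : CharP (K ⊗[k] AsanumaAlgebra k p t u) p := charP_tensorProduct hτ hμ
  refine sub_sub_mul_pow_char_eq ?_
  rw [map_y_pow]
  simp only [← map_pow, hτ, hμ, ← IsScalarTower.algebraMap_apply]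

noncomputable def baseChangeEquiv : K ⊗[k] AsanumaAlgebra k p t u ≃ₐ[K] K[X] :=
  AlgEquiv.ofAlgHom (toPolynomial hτ hμ) (Polynomial.aeval (coordinate τ μ))
    (Polynomial.algHom_ext (by simp [toPolynomial_coordinate hτ hμ]))
    (by
      refine Algebra.TensorProduct.ext (Subsingleton.elim _ _) (algHom_ext ?_ ?_)
      · show Polynomial.aeval _ (toPolynomial hτ hμ (includeRight x)) = includeRight x
        rw [toPolynomial_includeRight_x, Polynomial.aeval_X_pow, coordinate_pow hτ hμ]
      · show Polynomial.aeval _ (toPolynomial hτ hμ (includeRight y)) = includeRight y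
        rw [toPolynomial_includeRight_y, map_add, map_add, map_mul, Polynomial.aeval_X,
          Polynomial.aeval_X_pow, Polynomial.aeval_C, Polynomial.aeval_C, coordinate_pow hτ hμ,
          coordinate]
        ring)

end AsanumaAlgebra

end

universe v w

theorem AsanumaAlgebra.nonempty_A1FormWitnessOverField {k : Type v} [Field k] (p : ℕ)
    [Fact p.Prime] [CharP k p] (t u : k) :
    Nonempty (A1FormWitnessOverField.{v, v, max v w} k (AsanumaAlgebra k p t u)) := by
  have hp : 0 < p := (Fact.out : p.Prime).pos
  obtain ⟨τ, hτ⟩ := IsAlgClosed.exists_pow_nat_eq (algebraMap k (AlgebraicClosure k) t) hp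
  obtain ⟨μ, hμ⟩ := IsAlgClosed.exists_pow_nat_eq (algebraMap k (AlgebraicClosure k) u) hp
  have : Algebra.IsAlgebraic k (ULift.{w} (AlgebraicClosure k)) := ULift.algEquiv.symm.isAlgebraic
  exact ⟨⟨ULift (AlgebraicClosure k), inferInstance,
    baseChangeEquiv (τ := .up τ) (μ := .up μ) (congrArg ULift.up hτ) (congrArg ULift.up hμ)⟩⟩


/-- **Example 1, form property.** Let `p` be a prime, `k = 𝔽_p(t,u)` and
`A = k[X,Y]/(Y^p - t - X - u·X^p)`.  If `k'` is a field extension of `k` containing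
elements `τ`, `μ` with `τ^p = t` and `μ^p = u`, then `A ⊗[k] k' ≅ k'[T]` as
`k'`-algebras; in particular, `A` is an `𝔸¹`-form over `k`. -/
theorem asanumaExample_is_A1_form (p : ℕ) [Fact p.Prime] :
    (∀ (k' : Type*) [Field k'] [Algebra (RatFunc2 p) k'] (τ μ : k'),
      τ ^ p = algebraMap (RatFunc2 p) k' (tVar p) →
      μ ^ p = algebraMap (RatFunc2 p) k' (uVar p) →
      Nonempty ((k' ⊗[RatFunc2 p] AsanumaExample p) ≃ₐ[k'] Polynomial k')) ∧
    Nonempty (A1FormWitnessOverField (RatFunc2 p) (AsanumaExample p)) := by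
  have : CharP (RatFunc2 p) p :=
    charP_of_injective_algebraMap (IsFractionRing.injective (MvPolynomial (Fin 2) (ZMod p)) _) p
  refine ⟨fun k' _ _ τ μ hτ hμ ↦ ?_, AsanumaAlgebra.nonempty_A1FormWitnessOverField p _ _⟩
  have : CharP k' p := charP_of_injective_algebraMap (algebraMap (RatFunc2 p) k').injective p
  exact ⟨AsanumaAlgebra.baseChangeEquiv hτ hμ⟩
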